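/- arXiv:1012.0821 — 3 statements merged into one kernel-verified Lean document; each statement's English description precedes it below -/
import Mathlib

section
/- Let A : (S0×S1) → (A0×A1) be any stochastic matrix and for c ∈ {0,1} let A_c : S_c → A_c be stochastic matrices. For c ∈ {0,1} let Δ_c = mar_{A_{1−c}}(A) − A_c ⊗ e_{S_{1−c}}^T be the no-signaling violation matrices, and let Δ_c^+ be their positive parts. Then there exists a no-signaling stochastic matrix A_ns : (S0×S1) → (A0×A1) witnessed by A_0, A_1 (i.e., mar_{A_{1−c}}(A_ns) = A_c ⊗ e_{S_{1−c}}^T for both c) such that for every entrywise nonnegative verifier matrix V with columns π_{i,j} v_{i,j} (0 ≤ v_{i,j} ≤ e) and every stochastic matrix B, ⟨V, A_ns ⊗ B⟩ ≤ ⟨V, A ⊗ B⟩ + ⟨Δ_0^+, e_{A_0} p_Alice^T⟩ + ⟨Δ_1^+, e_{A_1} p_Alice^T⟩, where p_Alice(i) = Σ_j π_{i,j}. -/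
open Finset

/-- A matrix with rows indexed by answers `K` and columns by questions `Q` is stochastic
if it is entrywise nonnegative and each column sums to 1. -/
def Stochastic {K Q : Type*} [Fintype K] (M : K → Q → ℝ) : Prop :=
  (∀ k q, 0 ≤ M k q) ∧ ∀ q, ∑ k, M k q = 1

set_option linter.unusedSectionVars false

namespace RoundingAux

lemma mul_le_max0 {v x : ℝ} (h0 : 0 ≤ v) (h1 : v ≤ 1) : v * x ≤ max 0 x := by
  rcases le_or_gt x 0 with h | h
  · exact le_max_of_le_left (mul_nonpos_of_nonneg_of_nonpos h0 h)
  · calc v * x ≤ 1 * x := by nlinarith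
    _ = x := one_mul x
    _ ≤ max 0 x := le_max_right _ _

variable {S0 S1 K0 K1 : Type*} [Fintype S0] [Fintype S1] [Fintype K0] [Fintype K1]

variable (A : K0 × K1 → S0 × S1 → ℝ) (A0 : K0 → S0 → ℝ) (A1 : K1 → S1 → ℝ)

/-- marginal of `A` over the second answer. -/
noncomputable def P (k0 : K0) (i : S0 × S1) : ℝ := ∑ k1, A (k0, k1) i

/-- marginal of `A` over the first answer. -/
noncomputable def Q (k1 : K1) (i : S0 × S1) : ℝ := ∑ k0, A (k0, k1) i

noncomputable def rho0 (k0 : K0) (i : S0 × S1) : ℝ :=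
  if P A k0 i = 0 then 0 else max 0 (P A k0 i - A0 k0 i.1) / P A k0 i

noncomputable def rho1 (k1 : K1) (i : S0 × S1) : ℝ :=
  if Q A k1 i = 0 then 0 else max 0 (Q A k1 i - A1 k1 i.2) / Q A k1 i

noncomputable def Ap (k : K0 × K1) (i : S0 × S1) : ℝ :=
  A k i * ((1 - rho0 A A0 k.1 i) * (1 - rho1 A A1 k.2 i))

noncomputable def d0 (k0 : K0) (i : S0 × S1) : ℝ :=
  A0 k0 i.1 - ∑ k1, Ap A A0 A1 (k0, k1) i

noncomputable def d1 (k1 : K1) (i : S0 × S1) : ℝ :=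
  A1 k1 i.2 - ∑ k0, Ap A A0 A1 (k0, k1) i

noncomputable def DD (i : S0 × S1) : ℝ := ∑ k0, d0 A A0 A1 k0 i

noncomputable def Ans (k : K0 × K1) (i : S0 × S1) : ℝ :=
  Ap A A0 A1 k i + d0 A A0 A1 k.1 i * d1 A A0 A1 k.2 i / DD A A0 A1 i

section lemmas

variable (hAnn : ∀ k i, 0 ≤ A k i) (hA0nn : ∀ k q, 0 ≤ A0 k q) (hA1nn : ∀ k q, 0 ≤ A1 k q)

include hAnn hA0nn hA1nn

lemma P_nonneg (k0 : K0) (i : S0 × S1) : 0 ≤ P A k0 i :=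
  Finset.sum_nonneg fun _ _ => hAnn _ _

lemma Q_nonneg (k1 : K1) (i : S0 × S1) : 0 ≤ Q A k1 i :=
  Finset.sum_nonneg fun _ _ => hAnn _ _

lemma rho0_nonneg (k0 : K0) (i : S0 × S1) : 0 ≤ rho0 A A0 k0 i := by
  unfold rho0
  split
  · exact le_refl 0
  · exact div_nonneg (le_max_left _ _) (P_nonneg A A0 A1 hAnn hA0nn hA1nn k0 i)

lemma rho1_nonneg (k1 : K1) (i : S0 × S1) : 0 ≤ rho1 A A1 k1 i := by
  unfold rho1
  split
  · exact le_refl 0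
  · exact div_nonneg (le_max_left _ _) (Q_nonneg A A0 A1 hAnn hA0nn hA1nn k1 i)

lemma rho0_le_one (k0 : K0) (i : S0 × S1) : rho0 A A0 k0 i ≤ 1 := by
  unfold rho0
  split
  · exact zero_le_one
  · next h =>
    have hP : 0 < P A k0 i := lt_of_le_of_ne (P_nonneg A A0 A1 hAnn hA0nn hA1nn k0 i) (Ne.symm h)
    rw [div_le_one hP]
    have h1 : P A k0 i - A0 k0 i.1 ≤ P A k0 i := by
      have := hA0nn k0 i.1; linarith
    exact max_le hP.le h1

lemma rho1_le_one (k1 : K1) (i : S0 × S1) : rho1 A A1 k1 i ≤ 1 := by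
  unfold rho1
  split
  · exact zero_le_one
  · next h =>
    have hQ : 0 < Q A k1 i := lt_of_le_of_ne (Q_nonneg A A0 A1 hAnn hA0nn hA1nn k1 i) (Ne.symm h)
    rw [div_le_one hQ]
    have h1 : Q A k1 i - A1 k1 i.2 ≤ Q A k1 i := by
      have := hA1nn k1 i.2; linarith
    exact max_le hQ.le h1

lemma rho0_mul (k0 : K0) (i : S0 × S1) :
    rho0 A A0 k0 i * P A k0 i = max 0 (P A k0 i - A0 k0 i.1) := by
  unfold rho0
  split
  · next h =>
    rw [h, mul_zero]
    have := hA0nn k0 i.1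
    rw [eq_comm, max_eq_left]; linarith
  · next h => exact div_mul_cancel₀ _ h

lemma rho1_mul (k1 : K1) (i : S0 × S1) :
    rho1 A A1 k1 i * Q A k1 i = max 0 (Q A k1 i - A1 k1 i.2) := by
  unfold rho1
  split
  · next h =>
    rw [h, mul_zero]
    have := hA1nn k1 i.2
    rw [eq_comm, max_eq_left]; linarith
  · next h => exact div_mul_cancel₀ _ h

lemma Ap_nonneg (k : K0 × K1) (i : S0 × S1) : 0 ≤ Ap A A0 A1 k i := by
  unfold Ap
  have h1 := rho0_le_one A A0 A1 hAnn hA0nn hA1nn k.1 i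
  have h2 := rho1_le_one A A0 A1 hAnn hA0nn hA1nn k.2 i
  exact mul_nonneg (hAnn k i) (mul_nonneg (by linarith) (by linarith))

lemma Ap_le (k : K0 × K1) (i : S0 × S1) : Ap A A0 A1 k i ≤ A k i := by
  unfold Ap
  have h1 := rho0_le_one A A0 A1 hAnn hA0nn hA1nn k.1 i
  have h2 := rho1_le_one A A0 A1 hAnn hA0nn hA1nn k.2 i
  have h3 := rho0_nonneg A A0 A1 hAnn hA0nn hA1nn k.1 i
  have h4 := rho1_nonneg A A0 A1 hAnn hA0nn hA1nn k.2 i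
  have hmul : (1 - rho0 A A0 k.1 i) * (1 - rho1 A A1 k.2 i) ≤ 1 := by
    nlinarith [mul_le_of_le_one_right h3 h2]
  calc A k i * ((1 - rho0 A A0 k.1 i) * (1 - rho1 A A1 k.2 i))
      ≤ A k i * 1 := mul_le_mul_of_nonneg_left hmul (hAnn k i)
    _ = A k i := mul_one _

lemma sum_Ap_le0 (k0 : K0) (i : S0 × S1) :
    ∑ k1, Ap A A0 A1 (k0, k1) i ≤ A0 k0 i.1 := by
  have step1 : ∑ k1, Ap A A0 A1 (k0, k1) i ≤ (1 - rho0 A A0 k0 i) * P A k0 i := by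
    rw [P, Finset.mul_sum]
    apply Finset.sum_le_sum
    intro k1 _
    have hap : Ap A A0 A1 (k0, k1) i
        = A (k0, k1) i * ((1 - rho0 A A0 k0 i) * (1 - rho1 A A1 k1 i)) := rfl
    rw [hap]
    have h1 := rho0_le_one A A0 A1 hAnn hA0nn hA1nn k0 i
    have h2 := rho1_le_one A A0 A1 hAnn hA0nn hA1nn k1 i
    have h3 := rho0_nonneg A A0 A1 hAnn hA0nn hA1nn k0 i
    have h4 := rho1_nonneg A A0 A1 hAnn hA0nn hA1nn k1 i
    have := hAnn (k0, k1) i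
    nlinarith [mul_nonneg (mul_nonneg this (by linarith : (0:ℝ) ≤ 1 - rho0 A A0 k0 i))
      (by linarith : (0:ℝ) ≤ rho1 A A1 k1 i)]
  have step2 : (1 - rho0 A A0 k0 i) * P A k0 i ≤ A0 k0 i.1 := by
    have hm := rho0_mul A A0 A1 hAnn hA0nn hA1nn k0 i
    have h1 : P A k0 i - A0 k0 i.1 ≤ max 0 (P A k0 i - A0 k0 i.1) := le_max_right _ _
    nlinarith [le_max_left 0 (P A k0 i - A0 k0 i.1)]
  linarith

lemma sum_Ap_le1 (k1 : K1) (i : S0 × S1) :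
    ∑ k0, Ap A A0 A1 (k0, k1) i ≤ A1 k1 i.2 := by
  have step1 : ∑ k0, Ap A A0 A1 (k0, k1) i ≤ (1 - rho1 A A1 k1 i) * Q A k1 i := by
    rw [Q, Finset.mul_sum]
    apply Finset.sum_le_sum
    intro k0 _
    have hap : Ap A A0 A1 (k0, k1) i
        = A (k0, k1) i * ((1 - rho0 A A0 k0 i) * (1 - rho1 A A1 k1 i)) := rfl
    rw [hap]
    have h1 := rho0_le_one A A0 A1 hAnn hA0nn hA1nn k0 i
    have h2 := rho1_le_one A A0 A1 hAnn hA0nn hA1nn k1 i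
    have h3 := rho0_nonneg A A0 A1 hAnn hA0nn hA1nn k0 i
    have h4 := rho1_nonneg A A0 A1 hAnn hA0nn hA1nn k1 i
    have := hAnn (k0, k1) i
    nlinarith [mul_nonneg (mul_nonneg this (by linarith : (0:ℝ) ≤ 1 - rho1 A A1 k1 i))
      (by linarith : (0:ℝ) ≤ rho0 A A0 k0 i)]
  have step2 : (1 - rho1 A A1 k1 i) * Q A k1 i ≤ A1 k1 i.2 := by
    have hm := rho1_mul A A0 A1 hAnn hA0nn hA1nn k1 i
    have h1 : Q A k1 i - A1 k1 i.2 ≤ max 0 (Q A k1 i - A1 k1 i.2) := le_max_right _ _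
    nlinarith [le_max_left 0 (Q A k1 i - A1 k1 i.2)]
  linarith

lemma d0_nonneg (k0 : K0) (i : S0 × S1) : 0 ≤ d0 A A0 A1 k0 i := by
  have := sum_Ap_le0 A A0 A1 hAnn hA0nn hA1nn k0 i
  unfold d0; linarith

lemma d1_nonneg (k1 : K1) (i : S0 × S1) : 0 ≤ d1 A A0 A1 k1 i := by
  have := sum_Ap_le1 A A0 A1 hAnn hA0nn hA1nn k1 i
  unfold d1; linarith

lemma DD_nonneg (i : S0 × S1) : 0 ≤ DD A A0 A1 i :=
  Finset.sum_nonneg fun k0 _ => d0_nonneg A A0 A1 hAnn hA0nn hA1nn k0 i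

end lemmas

section sums

variable (hA : Stochastic A) (hA0 : Stochastic A0) (hA1 : Stochastic A1)

include hA hA0 hA1

lemma DD_eq (i : S0 × S1) :
    DD A A0 A1 i = 1 - ∑ k : K0 × K1, Ap A A0 A1 k i := by
  rw [DD, Fintype.sum_prod_type]
  unfold d0
  rw [Finset.sum_sub_distrib, hA0.2 i.1]

lemma DD_eq_sum_d1 (i : S0 × S1) :
    DD A A0 A1 i = ∑ k1, d1 A A0 A1 k1 i := by
  rw [DD_eq A A0 A1 hA hA0 hA1 i]
  unfold d1
  rw [Finset.sum_sub_distrib, hA1.2 i.2, Fintype.sum_prod_type]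
  congr 1
  exact Finset.sum_comm

lemma Ans_mar0 (k0 : K0) (i : S0 × S1) :
    ∑ k1, Ans A A0 A1 (k0, k1) i = A0 k0 i.1 := by
  have hcalc : ∑ k1, Ans A A0 A1 (k0, k1) i
      = (∑ k1, Ap A A0 A1 (k0, k1) i) + d0 A A0 A1 k0 i * DD A A0 A1 i / DD A A0 A1 i := by
    unfold Ans
    rw [Finset.sum_add_distrib]
    congr 1
    rw [show (∑ x : K1, d0 A A0 A1 (k0, x).1 i * d1 A A0 A1 (k0, x).2 i / DD A A0 A1 i)
        = d0 A A0 A1 k0 i * (∑ x : K1, d1 A A0 A1 x i) / DD A A0 A1 i from by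
      rw [Finset.mul_sum, Finset.sum_div]]
    rw [← DD_eq_sum_d1 A A0 A1 hA hA0 hA1 i]
  rw [hcalc]
  rcases eq_or_ne (DD A A0 A1 i) 0 with h | h
  · have hd0 : d0 A A0 A1 k0 i = 0 := by
      have := Finset.sum_eq_zero_iff_of_nonneg
        (fun k0' (_ : k0' ∈ Finset.univ) => d0_nonneg A A0 A1 hA.1 hA0.1 hA1.1 k0' i)
      rw [DD] at h
      exact (this.1 h) k0 (Finset.mem_univ k0)
    have : ∑ k1, Ap A A0 A1 (k0, k1) i = A0 k0 i.1 := by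
      unfold d0 at hd0; linarith
    rw [h, mul_zero, zero_div, add_zero, this]
  · rw [mul_div_assoc, div_self h, mul_one]
    unfold d0; ring

lemma Ans_mar1 (k1 : K1) (i : S0 × S1) :
    ∑ k0, Ans A A0 A1 (k0, k1) i = A1 k1 i.2 := by
  have hcalc : ∑ k0, Ans A A0 A1 (k0, k1) i
      = (∑ k0, Ap A A0 A1 (k0, k1) i) + DD A A0 A1 i * d1 A A0 A1 k1 i / DD A A0 A1 i := by
    unfold Ans
    rw [Finset.sum_add_distrib]
    congr 1
    rw [show (∑ x : K0, d0 A A0 A1 (x, k1).1 i * d1 A A0 A1 (x, k1).2 i / DD A A0 A1 i)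
        = (∑ x : K0, d0 A A0 A1 x i) * d1 A A0 A1 k1 i / DD A A0 A1 i from by
      rw [Finset.sum_mul, Finset.sum_div]]
    rw [← DD]
  rw [hcalc]
  rcases eq_or_ne (DD A A0 A1 i) 0 with h | h
  · have hd1 : d1 A A0 A1 k1 i = 0 := by
      have hD1 := DD_eq_sum_d1 A A0 A1 hA hA0 hA1 i
      rw [h] at hD1
      have := Finset.sum_eq_zero_iff_of_nonneg
        (fun k1' (_ : k1' ∈ Finset.univ) => d1_nonneg A A0 A1 hA.1 hA0.1 hA1.1 k1' i)
      exact (this.1 hD1.symm) k1 (Finset.mem_univ k1)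
    have : ∑ k0, Ap A A0 A1 (k0, k1) i = A1 k1 i.2 := by
      unfold d1 at hd1; linarith
    rw [h, zero_mul, zero_div, add_zero, this]
  · rw [mul_comm, mul_div_assoc, div_self h, mul_one]
    unfold d1; ring

lemma Ans_nonneg (k : K0 × K1) (i : S0 × S1) : 0 ≤ Ans A A0 A1 k i := by
  unfold Ans
  have h1 := Ap_nonneg A A0 A1 hA.1 hA0.1 hA1.1 k i
  have h2 := d0_nonneg A A0 A1 hA.1 hA0.1 hA1.1 k.1 i
  have h3 := d1_nonneg A A0 A1 hA.1 hA0.1 hA1.1 k.2 i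
  have h4 := DD_nonneg A A0 A1 hA.1 hA0.1 hA1.1 i
  positivity

lemma Ans_stochastic : Stochastic (Ans A A0 A1) := by
  constructor
  · exact fun k i => Ans_nonneg A A0 A1 hA hA0 hA1 k i
  · intro i
    rw [Fintype.sum_prod_type]
    have : ∀ k0, ∑ k1, Ans A A0 A1 (k0, k1) i = A0 k0 i.1 :=
      fun k0 => Ans_mar0 A A0 A1 hA hA0 hA1 k0 i
    rw [Finset.sum_congr rfl (fun k0 _ => this k0)]
    exact hA0.2 i.1

/-- Key penalty bound. -/
lemma key (i : S0 × S1) :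
    ∑ k : K0 × K1, max 0 (Ans A A0 A1 k i - A k i) ≤
      (∑ k0, max 0 (P A k0 i - A0 k0 i.1)) + (∑ k1, max 0 (Q A k1 i - A1 k1 i.2)) := by
  have hstep1 : ∑ k : K0 × K1, max 0 (Ans A A0 A1 k i - A k i) ≤
      ∑ k : K0 × K1, d0 A A0 A1 k.1 i * d1 A A0 A1 k.2 i / DD A A0 A1 i := by
    apply Finset.sum_le_sum
    intro k _
    have hnn : 0 ≤ d0 A A0 A1 k.1 i * d1 A A0 A1 k.2 i / DD A A0 A1 i := by
      have h2 := d0_nonneg A A0 A1 hA.1 hA0.1 hA1.1 k.1 i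
      have h3 := d1_nonneg A A0 A1 hA.1 hA0.1 hA1.1 k.2 i
      have h4 := DD_nonneg A A0 A1 hA.1 hA0.1 hA1.1 i
      positivity
    apply max_le hnn
    have := Ap_le A A0 A1 hA.1 hA0.1 hA1.1 k i
    unfold Ans; linarith
  have hstep2 : ∑ k : K0 × K1, d0 A A0 A1 k.1 i * d1 A A0 A1 k.2 i / DD A A0 A1 i
      = DD A A0 A1 i := by
    rw [Fintype.sum_prod_type]
    have : ∀ k0, ∑ k1, d0 A A0 A1 k0 i * d1 A A0 A1 k1 i / DD A A0 A1 i
        = d0 A A0 A1 k0 i * DD A A0 A1 i / DD A A0 A1 i := by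
      intro k0
      rw [show (∑ k1, d0 A A0 A1 k0 i * d1 A A0 A1 k1 i / DD A A0 A1 i)
          = d0 A A0 A1 k0 i * (∑ k1, d1 A A0 A1 k1 i) / DD A A0 A1 i from by
        rw [Finset.mul_sum, Finset.sum_div]]
      rw [← DD_eq_sum_d1 A A0 A1 hA hA0 hA1 i]
    rw [Finset.sum_congr rfl (fun k0 _ => this k0)]
    have : ∀ k0, d0 A A0 A1 k0 i * DD A A0 A1 i / DD A A0 A1 i
        = d0 A A0 A1 k0 i * (DD A A0 A1 i / DD A A0 A1 i) := fun k0 => mul_div_assoc _ _ _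
    rw [Finset.sum_congr rfl (fun k0 _ => this k0), ← Finset.sum_mul]
    rcases eq_or_ne (DD A A0 A1 i) 0 with h | h
    · rw [← DD, h, zero_div, mul_zero]
    · rw [div_self h, mul_one, DD]
  have hstep3 : DD A A0 A1 i ≤
      (∑ k : K0 × K1, A k i * rho0 A A0 k.1 i) + (∑ k : K0 × K1, A k i * rho1 A A1 k.2 i) := by
    rw [DD_eq A A0 A1 hA hA0 hA1 i]
    have hsum : (1 : ℝ) - ∑ k : K0 × K1, Ap A A0 A1 k i
        = ∑ k : K0 × K1, (A k i - Ap A A0 A1 k i) := by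
      rw [Finset.sum_sub_distrib, hA.2 i]
    rw [hsum, ← Finset.sum_add_distrib]
    apply Finset.sum_le_sum
    intro k _
    unfold Ap
    have h1 := rho0_nonneg A A0 A1 hA.1 hA0.1 hA1.1 k.1 i
    have h2 := rho1_nonneg A A0 A1 hA.1 hA0.1 hA1.1 k.2 i
    have := hA.1 k i
    nlinarith [mul_nonneg (mul_nonneg this h1) h2]
  have hstep4 : ∑ k : K0 × K1, A k i * rho0 A A0 k.1 i
      = ∑ k0, max 0 (P A k0 i - A0 k0 i.1) := by
    rw [Fintype.sum_prod_type]
    apply Finset.sum_congr rfl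
    intro k0 _
    rw [← rho0_mul A A0 A1 hA.1 hA0.1 hA1.1 k0 i, P, Finset.mul_sum]
    apply Finset.sum_congr rfl
    intro k1 _
    ring
  have hstep5 : ∑ k : K0 × K1, A k i * rho1 A A1 k.2 i
      = ∑ k1, max 0 (Q A k1 i - A1 k1 i.2) := by
    rw [Fintype.sum_prod_type, Finset.sum_comm]
    apply Finset.sum_congr rfl
    intro k1 _
    rw [← rho1_mul A A0 A1 hA.1 hA0.1 hA1.1 k1 i, Q, Finset.mul_sum]
    apply Finset.sum_congr rfl
    intro k0 _
    ring
  calc ∑ k : K0 × K1, max 0 (Ans A A0 A1 k i - A k i)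
      ≤ DD A A0 A1 i := by rw [← hstep2]; exact hstep1
    _ ≤ _ := by rw [← hstep4, ← hstep5]; exact hstep3

end sums

end RoundingAux

open RoundingAux in
/-- Rounding theorem: from any stochastic `A : (S0×S1) → (A0×A1)` and stochastic
`A0, A1` one can produce a no-signaling stochastic matrix `Ans` witnessed by `A0, A1`
such that against every verifier `V` (with columns `π_{i,j} v_{i,j}`) and every
stochastic `B`, the rejection probability of `Ans` exceeds that of `A` by at most the
penalty terms `⟨Δ_c^+, e p_Alice^T⟩` measuring the no-signaling violations of `A`. -/
theorem rounding_theorem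
    {S0 S1 K0 K1 J L : Type*}
    [Fintype S0] [Fintype S1] [Fintype K0] [Fintype K1] [Fintype J] [Fintype L]
    (A : K0 × K1 → S0 × S1 → ℝ) (hA : Stochastic A)
    (A0 : K0 → S0 → ℝ) (hA0 : Stochastic A0)
    (A1 : K1 → S1 → ℝ) (hA1 : Stochastic A1) :
    ∃ Ans : K0 × K1 → S0 × S1 → ℝ, Stochastic Ans ∧
      (∀ k0 i0 i1, ∑ k1, Ans (k0, k1) (i0, i1) = A0 k0 i0) ∧
      (∀ k1 i0 i1, ∑ k0, Ans (k0, k1) (i0, i1) = A1 k1 i1) ∧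
      ∀ (π : (S0 × S1) × J → ℝ), (∀ q, 0 ≤ π q) → (∑ q, π q = 1) →
      ∀ (v : (S0 × S1) × J → (K0 × K1) × L → ℝ), (∀ q r, 0 ≤ v q r ∧ v q r ≤ 1) →
      ∀ (B : L → J → ℝ), Stochastic B →
        (∑ i, ∑ j, ∑ k, ∑ l, π (i, j) * v (i, j) (k, l) * (Ans k i * B l j)) ≤
          (∑ i, ∑ j, ∑ k, ∑ l, π (i, j) * v (i, j) (k, l) * (A k i * B l j)) +
          (∑ k0, ∑ i, max 0 ((∑ k1, A (k0, k1) i) - A0 k0 i.1) * ∑ j, π (i, j)) +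
          (∑ k1, ∑ i, max 0 ((∑ k0, A (k0, k1) i) - A1 k1 i.2) * ∑ j, π (i, j)) := by
  classical
  refine ⟨Ans A A0 A1, Ans_stochastic A A0 A1 hA hA0 hA1,
    fun k0 i0 i1 => Ans_mar0 A A0 A1 hA hA0 hA1 k0 (i0, i1),
    fun k1 i0 i1 => Ans_mar1 A A0 A1 hA hA0 hA1 k1 (i0, i1), ?_⟩
  intro π hπnn _ v hv B hB
  -- abbreviation for the positive-part excess
  set M : K0 × K1 → S0 × S1 → ℝ := fun k i => max 0 (Ans A A0 A1 k i - A k i) with hM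
  have hMnn : ∀ k i, 0 ≤ M k i := fun k i => le_max_left _ _
  -- pointwise bound
  have hpt : ∀ i j k l, π (i, j) * v (i, j) (k, l) * (Ans A A0 A1 k i * B l j) ≤
      π (i, j) * v (i, j) (k, l) * (A k i * B l j) + π (i, j) * M k i * B l j := by
    intro i j k l
    have hv' := hv (i, j) (k, l)
    have hvm : v (i, j) (k, l) * (Ans A A0 A1 k i - A k i) ≤ M k i :=
      mul_le_max0 hv'.1 hv'.2
    have hπB : 0 ≤ π (i, j) * B l j := mul_nonneg (hπnn (i, j)) (hB.1 l j)
    nlinarith [mul_le_mul_of_nonneg_left hvm hπB]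
  -- sum the pointwise bound
  have step1 : (∑ i, ∑ j, ∑ k, ∑ l, π (i, j) * v (i, j) (k, l) * (Ans A A0 A1 k i * B l j)) ≤
      (∑ i, ∑ j, ∑ k, ∑ l, π (i, j) * v (i, j) (k, l) * (A k i * B l j)) +
      (∑ i, ∑ j, ∑ k, ∑ l, π (i, j) * M k i * B l j) := by
    rw [← Finset.sum_add_distrib]
    apply Finset.sum_le_sum; intro i _
    rw [← Finset.sum_add_distrib]
    apply Finset.sum_le_sum; intro j _
    rw [← Finset.sum_add_distrib]
    apply Finset.sum_le_sum; intro k _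
    rw [← Finset.sum_add_distrib]
    apply Finset.sum_le_sum; intro l _
    exact hpt i j k l
  -- simplify the error term
  have step2 : (∑ i, ∑ j, ∑ k, ∑ l, π (i, j) * M k i * B l j) =
      ∑ i, (∑ k, M k i) * (∑ j, π (i, j)) := by
    apply Finset.sum_congr rfl
    intro i _
    have h1 : ∀ j k, ∑ l, π (i, j) * M k i * B l j = π (i, j) * M k i := by
      intro j k
      rw [← Finset.mul_sum, hB.2 j, mul_one]
    calc ∑ j, ∑ k, ∑ l, π (i, j) * M k i * B l j
        = ∑ j, ∑ k, π (i, j) * M k i := by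
          apply Finset.sum_congr rfl; intro j _
          exact Finset.sum_congr rfl fun k _ => h1 j k
      _ = ∑ k, ∑ j, π (i, j) * M k i := Finset.sum_comm
      _ = (∑ k, M k i) * (∑ j, π (i, j)) := by
          rw [Finset.sum_mul]
          apply Finset.sum_congr rfl; intro k _
          rw [Finset.mul_sum]
          exact Finset.sum_congr rfl fun j _ => mul_comm _ _
  -- bound the error via the key lemma
  have step3 : ∑ i, (∑ k, M k i) * (∑ j, π (i, j)) ≤
      (∑ k0, ∑ i, max 0 ((∑ k1, A (k0, k1) i) - A0 k0 i.1) * ∑ j, π (i, j)) +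
      (∑ k1, ∑ i, max 0 ((∑ k0, A (k0, k1) i) - A1 k1 i.2) * ∑ j, π (i, j)) := by
    have hb : ∀ i, (∑ k, M k i) * (∑ j, π (i, j)) ≤
        ((∑ k0, max 0 (P A k0 i - A0 k0 i.1)) + (∑ k1, max 0 (Q A k1 i - A1 k1 i.2))) *
          (∑ j, π (i, j)) := by
      intro i
      apply mul_le_mul_of_nonneg_right (key A A0 A1 hA hA0 hA1 i)
      exact Finset.sum_nonneg fun j _ => hπnn (i, j)
    calc ∑ i, (∑ k, M k i) * (∑ j, π (i, j))
        ≤ ∑ i, ((∑ k0, max 0 (P A k0 i - A0 k0 i.1)) +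
            (∑ k1, max 0 (Q A k1 i - A1 k1 i.2))) * (∑ j, π (i, j)) :=
          Finset.sum_le_sum fun i _ => hb i
      _ = (∑ i, ∑ k0, max 0 (P A k0 i - A0 k0 i.1) * (∑ j, π (i, j))) +
          (∑ i, ∑ k1, max 0 (Q A k1 i - A1 k1 i.2) * (∑ j, π (i, j))) := by
          rw [← Finset.sum_add_distrib]
          apply Finset.sum_congr rfl
          intro i _
          rw [add_mul, Finset.sum_mul, Finset.sum_mul]
      _ = _ := by
          rw [Finset.sum_comm (γ := S0 × S1)]
          congr 1
          exact Finset.sum_comm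
  linarith [step1, step2 ▸ step3.trans_eq' rfl, step3]
end

section
/- With the relaxed min-max value μ(V) = min_{(A,A0,A1)} max_{(B,Π0,Π1)} [⟨V, A⊗B⟩ + Σ_{c∈{0,1}} ⟨mar_{A_{1−c}}(A) − A_c ⊗ e^T, Π_c⟩] (minimizing over triples of arbitrary stochastic matrices A, A0, A1 and maximizing over no-signaling stochastic B and matrices 0 ≤ Π_c ≤ e·p_Alice^T), and the original value λ(V) = min_A max_B ⟨V, A⊗B⟩ over no-signaling stochastic matrices A, B: it holds that μ(V) = λ(V). -/
open Finset

/-- A stochastic matrix on question pairs/answer pairs is no-signaling if each of its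
single-prover marginals depends only on that prover's question, as witnessed by a pair
of stochastic matrices. -/
def NoSig {S0 S1 K0 K1 : Type*} [Fintype K0] [Fintype K1]
    (A : K0 × K1 → S0 × S1 → ℝ) : Prop :=
  (∃ A0 : K0 → S0 → ℝ, Stochastic A0 ∧
    ∀ k0 i0 i1, ∑ k1, A (k0, k1) (i0, i1) = A0 k0 i0) ∧
  (∃ A1 : K1 → S1 → ℝ, Stochastic A1 ∧
    ∀ k1 i0 i1, ∑ k0, A (k0, k1) (i0, i1) = A1 k1 i1)

/-- `⟨V, A ⊗ B⟩`: the probability that the verifier with question distribution `π`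
and payout vectors `v` rejects, given strategies `A` for Team Alice and `B` for
Team Bob. -/
def payoff {I J K L : Type*} [Fintype I] [Fintype J] [Fintype K] [Fintype L]
    (π : I × J → ℝ) (v : I × J → K × L → ℝ)
    (A : K → I → ℝ) (B : L → J → ℝ) : ℝ :=
  ∑ i, ∑ j, ∑ k, ∑ l, π (i, j) * v (i, j) (k, l) * (A k i * B l j)

-- ===== auxiliary lemmas =====

lemma pos_part_sum_comm {α : Type*} [Fintype α] {x y : α → ℝ} (h : ∑ a, x a = ∑ a, y a) :
    ∑ a, max (x a - y a) 0 = ∑ a, max (y a - x a) 0 := by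
  have key : ∀ a : α, max (x a - y a) 0 - max (y a - x a) 0 = x a - y a := by
    intro a
    rcases le_total (x a) (y a) with h' | h'
    · rw [max_eq_right (by linarith), max_eq_left (by linarith)]; ring
    · rw [max_eq_left (by linarith), max_eq_right (by linarith)]; ring
  have h2 : ∑ a, max (x a - y a) 0 - ∑ a, max (y a - x a) 0 = 0 := by
    rw [← Finset.sum_sub_distrib, Finset.sum_congr rfl fun a _ => key a,
      Finset.sum_sub_distrib, h, sub_self]
  linarith

lemma fix_left {K0 K1 : Type*} [Fintype K0] [Fintype K1]
    (P : K0 × K1 → ℝ) (hP : ∀ k, 0 ≤ P k) (hP1 : ∑ k, P k = 1)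
    (q : K0 → ℝ) (hq : ∀ k0, 0 ≤ q k0) (hq1 : ∑ k0, q k0 = 1) :
    ∃ P' : K0 × K1 → ℝ, (∀ k, 0 ≤ P' k) ∧
      (∀ k0, ∑ k1, P' (k0, k1) = q k0) ∧
      (∀ k1, ∑ k0, P' (k0, k1) = ∑ k0, P (k0, k1)) ∧
      ∑ k, max (P' k - P k) 0 ≤ ∑ k0, max (q k0 - ∑ k1, P (k0, k1)) 0 := by
  set m0 : K0 → ℝ := fun k0 => ∑ k1, P (k0, k1) with hm0def
  have hm0 : ∀ k0, 0 ≤ m0 k0 := fun k0 => Finset.sum_nonneg fun k1 _ => hP _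
  have hm0sum : ∑ k0, m0 k0 = 1 := by
    rw [← hP1, Fintype.sum_prod_type]
  set s : K0 → ℝ := fun k0 => if m0 k0 = 0 then 0 else min (q k0) (m0 k0) / m0 k0 with hsdef
  have hs0 : ∀ k0, 0 ≤ s k0 := by
    intro k0; simp only [hsdef]
    split
    · exact le_refl 0
    · rename_i h
      exact div_nonneg (le_min (hq k0) (hm0 k0)) (hm0 k0)
  have hs1 : ∀ k0, s k0 ≤ 1 := by
    intro k0; simp only [hsdef]
    split
    · exact zero_le_one
    · rename_i h
      exact div_le_one_of_le₀ (min_le_right _ _) (hm0 k0)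
  have hms : ∀ k0, m0 k0 * s k0 = min (q k0) (m0 k0) := by
    intro k0; simp only [hsdef]
    split
    · rename_i h
      rw [h, mul_zero]
      simp [min_eq_right, hq k0]
    · rename_i h
      field_simp
  set ε : ℝ := ∑ k0, max (q k0 - m0 k0) 0 with hεdef
  have hεnn : 0 ≤ ε := Finset.sum_nonneg fun _ _ => le_max_right _ _
  have hεflip : ε = ∑ k0, max (m0 k0 - q k0) 0 :=
    pos_part_sum_comm (by rw [hq1, hm0sum])
  have hminmax : ∀ k0, m0 k0 - min (q k0) (m0 k0) = max (m0 k0 - q k0) 0 := by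
    intro k0
    rcases le_total (q k0) (m0 k0) with h' | h'
    · rw [min_eq_left h', max_eq_left (by linarith)]
    · rw [min_eq_right h', max_eq_right (by linarith)]; ring
  set R : K1 → ℝ := fun k1 => ∑ k0, P (k0, k1) * (1 - s k0) with hRdef
  have hRnn : ∀ k1, 0 ≤ R k1 := fun k1 =>
    Finset.sum_nonneg fun k0 _ => mul_nonneg (hP _) (by linarith [hs1 k0])
  have hRsum : ∑ k1, R k1 = ε := by
    rw [hεflip, hRdef]
    rw [Finset.sum_comm]
    refine Finset.sum_congr rfl fun k0 _ => ?_
    rw [← Finset.sum_mul, ← hminmax k0, ← hms k0]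
    ring
  by_cases hε : ε = 0
  · have hqle : ∀ k0, q k0 ≤ m0 k0 := by
      intro k0
      have h1 : max (q k0 - m0 k0) 0 = 0 := by
        have hle : max (q k0 - m0 k0) 0 ≤ ε :=
          Finset.single_le_sum (f := fun k0 => max (q k0 - m0 k0) 0)
            (fun k _ => le_max_right _ _) (mem_univ k0)
        have := le_max_right (q k0 - m0 k0) (0:ℝ)
        rw [hε] at hle
        linarith
      by_contra h
      push_neg at h
      have : 0 < max (q k0 - m0 k0) 0 := lt_max_of_lt_left (by linarith)
      linarith
    have heq : ∀ k0, q k0 = m0 k0 := by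
      intro k0
      exact (Finset.sum_eq_sum_iff_of_le (fun k0 _ => hqle k0)).1
        (by rw [hq1, hm0sum]) k0 (mem_univ k0)
    refine ⟨P, hP, fun k0 => (heq k0).symm, fun _ => rfl, ?_⟩
    have hz : ∀ k : K0 × K1, max (P k - P k) 0 = 0 := fun k => by simp
    rw [Finset.sum_congr rfl fun k _ => hz k]
    simp only [Finset.sum_const, smul_zero]
    exact Finset.sum_nonneg fun _ _ => le_max_right _ _
  · have hεpos : 0 < ε := lt_of_le_of_ne hεnn (Ne.symm hε)
    set c : K0 → ℝ := fun k0 => max (q k0 - m0 k0) 0 / ε with hcdef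
    have hcnn : ∀ k0, 0 ≤ c k0 := fun k0 => div_nonneg (le_max_right _ _) hεnn
    have hcsum : ∑ k0, c k0 = 1 := by
      rw [hcdef, ← Finset.sum_div, ← hεdef, div_self hε]
    refine ⟨fun k => P k * s k.1 + c k.1 * R k.2, ?_, ?_, ?_, ?_⟩
    · intro k
      exact add_nonneg (mul_nonneg (hP k) (hs0 k.1)) (mul_nonneg (hcnn k.1) (hRnn k.2))
    · intro k0
      rw [Finset.sum_add_distrib]
      simp only [Prod.fst, Prod.snd]
      rw [← Finset.sum_mul, ← Finset.mul_sum, hRsum]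
      show m0 k0 * s k0 + c k0 * ε = q k0
      rw [hms k0, hcdef]
      field_simp
      rcases le_total (q k0) (m0 k0) with h' | h'
      · rw [min_eq_left h', max_eq_right (by linarith)]; ring
      · rw [min_eq_right h', max_eq_left (by linarith)]; ring
    · intro k1
      rw [Finset.sum_add_distrib]
      simp only [Prod.fst, Prod.snd]
      rw [← Finset.sum_mul, hcsum, one_mul]
      have h1 : ∑ k0, P (k0, k1) * s k0 = (∑ k0, P (k0, k1)) - R k1 := by
        rw [hRdef, ← Finset.sum_sub_distrib]
        exact Finset.sum_congr rfl fun k0 _ => by ring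
      rw [h1]; ring
    · have hterm : ∀ k : K0 × K1,
          max (P k * s k.1 + c k.1 * R k.2 - P k) 0 ≤ c k.1 * R k.2 := by
        intro k
        refine max_le ?_ (mul_nonneg (hcnn k.1) (hRnn k.2))
        have : P k * s k.1 - P k ≤ 0 := by
          nlinarith [hP k, hs1 k.1]
        linarith
      calc ∑ k : K0 × K1, max (P k * s k.1 + c k.1 * R k.2 - P k) 0
          ≤ ∑ k : K0 × K1, c k.1 * R k.2 := Finset.sum_le_sum fun k _ => hterm k
        _ = (∑ k0, c k0) * ∑ k1, R k1 := by
            rw [Fintype.sum_prod_type, Finset.sum_mul]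
            exact Finset.sum_congr rfl fun k0 _ => by rw [Finset.mul_sum]
        _ = ε := by rw [hcsum, hRsum, one_mul]
        _ = ∑ k0, max (q k0 - m0 k0) 0 := hεdef

lemma sum_swap_prod {K0 K1 : Type*} [Fintype K0] [Fintype K1] (f : K0 × K1 → ℝ) :
    ∑ k : K1 × K0, f (k.2, k.1) = ∑ k : K0 × K1, f k := by
  rw [Fintype.sum_prod_type, Fintype.sum_prod_type, Finset.sum_comm]

lemma fix_right {K0 K1 : Type*} [Fintype K0] [Fintype K1]
    (P : K0 × K1 → ℝ) (hP : ∀ k, 0 ≤ P k) (hP1 : ∑ k, P k = 1)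
    (q : K1 → ℝ) (hq : ∀ k1, 0 ≤ q k1) (hq1 : ∑ k1, q k1 = 1) :
    ∃ P' : K0 × K1 → ℝ, (∀ k, 0 ≤ P' k) ∧
      (∀ k1, ∑ k0, P' (k0, k1) = q k1) ∧
      (∀ k0, ∑ k1, P' (k0, k1) = ∑ k1, P (k0, k1)) ∧
      ∑ k, max (P' k - P k) 0 ≤ ∑ k1, max (q k1 - ∑ k0, P (k0, k1)) 0 := by
  obtain ⟨Q', h0, h1, h2, h3⟩ := fix_left (fun k : K1 × K0 => P (k.2, k.1))
    (fun k => hP _) (by rw [sum_swap_prod]; exact hP1) q hq hq1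
  refine ⟨fun k => Q' (k.2, k.1), fun k => h0 _, fun k1 => h1 k1, fun k0 => h2 k0, ?_⟩
  calc ∑ k : K0 × K1, max (Q' (k.2, k.1) - P k) 0
      = ∑ k : K1 × K0, max (Q' k - P (k.2, k.1)) 0 := by
        rw [← sum_swap_prod (f := fun k : K0 × K1 => max (Q' (k.2, k.1) - P k) 0)]
    _ ≤ ∑ k1, max (q k1 - ∑ k0, P (k0, k1)) 0 := h3

lemma fix_both {K0 K1 : Type*} [Fintype K0] [Fintype K1]
    (P : K0 × K1 → ℝ) (hP : ∀ k, 0 ≤ P k) (hP1 : ∑ k, P k = 1)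
    (q0 : K0 → ℝ) (hq0 : ∀ k0, 0 ≤ q0 k0) (hq01 : ∑ k0, q0 k0 = 1)
    (q1 : K1 → ℝ) (hq1 : ∀ k1, 0 ≤ q1 k1) (hq11 : ∑ k1, q1 k1 = 1) :
    ∃ P' : K0 × K1 → ℝ, (∀ k, 0 ≤ P' k) ∧
      (∀ k0, ∑ k1, P' (k0, k1) = q0 k0) ∧
      (∀ k1, ∑ k0, P' (k0, k1) = q1 k1) ∧
      ∑ k, max (P' k - P k) 0 ≤
        (∑ k0, max (q0 k0 - ∑ k1, P (k0, k1)) 0) +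
        (∑ k1, max (q1 k1 - ∑ k0, P (k0, k1)) 0) := by
  obtain ⟨Q, hQ0, hQr, hQc, hQtv⟩ := fix_left P hP hP1 q0 hq0 hq01
  have hQ1 : ∑ k, Q k = 1 := by
    rw [Fintype.sum_prod_type, Finset.sum_congr rfl fun k0 _ => hQr k0, hq01]
  obtain ⟨Q', hQ'0, hQ'c, hQ'r, hQ'tv⟩ := fix_right Q hQ0 hQ1 q1 hq1 hq11
  refine ⟨Q', hQ'0, fun k0 => by rw [hQ'r k0, hQr k0], hQ'c, ?_⟩
  have htri : ∀ k : K0 × K1, max (Q' k - P k) 0 ≤ max (Q' k - Q k) 0 + max (Q k - P k) 0 := by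
    intro k
    rcases le_total (Q' k - P k) 0 with h | h
    · rw [max_eq_right h]; positivity
    · rw [max_eq_left h]
      have := le_max_left (Q' k - Q k) (0:ℝ)
      have := le_max_left (Q k - P k) (0:ℝ)
      linarith
  calc ∑ k, max (Q' k - P k) 0
      ≤ ∑ k, (max (Q' k - Q k) 0 + max (Q k - P k) 0) :=
        Finset.sum_le_sum fun k _ => htri k
    _ = (∑ k, max (Q' k - Q k) 0) + ∑ k, max (Q k - P k) 0 := Finset.sum_add_distrib
    _ ≤ (∑ k1, max (q1 k1 - ∑ k0, Q (k0, k1)) 0) +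
        ∑ k0, max (q0 k0 - ∑ k1, P (k0, k1)) 0 := add_le_add hQ'tv hQtv
    _ = (∑ k0, max (q0 k0 - ∑ k1, P (k0, k1)) 0) +
        ∑ k1, max (q1 k1 - ∑ k0, P (k0, k1)) 0 := by
        rw [add_comm]
        congr 1
        exact Finset.sum_congr rfl fun k1 _ => by rw [hQc k1]

section PayoffAux
variable {I J K L : Type*} [Fintype I] [Fintype J] [Fintype K] [Fintype L]
  (π : I × J → ℝ) (v : I × J → K × L → ℝ)

lemma payoff_nonneg (hπ : ∀ q, 0 ≤ π q) (hv : ∀ q r, 0 ≤ v q r ∧ v q r ≤ 1)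
    (A : K → I → ℝ) (hA : ∀ k i, 0 ≤ A k i) (B : L → J → ℝ) (hB : ∀ l j, 0 ≤ B l j) :
    0 ≤ payoff π v A B := by
  refine Finset.sum_nonneg fun i _ => Finset.sum_nonneg fun j _ =>
    Finset.sum_nonneg fun k _ => Finset.sum_nonneg fun l _ => ?_
  exact mul_nonneg (mul_nonneg (hπ _) (hv _ _).1) (mul_nonneg (hA _ _) (hB _ _))

lemma payoff_le_one (hπ : ∀ q, 0 ≤ π q) (hπ1 : ∑ q, π q = 1)
    (hv : ∀ q r, 0 ≤ v q r ∧ v q r ≤ 1)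
    (A : K → I → ℝ) (hA : Stochastic A) (B : L → J → ℝ) (hB : Stochastic B) :
    payoff π v A B ≤ 1 := by
  have step : ∀ i j, ∑ k, ∑ l, π (i, j) * v (i, j) (k, l) * (A k i * B l j) ≤ π (i, j) := by
    intro i j
    calc ∑ k, ∑ l, π (i, j) * v (i, j) (k, l) * (A k i * B l j)
        ≤ ∑ k, ∑ l, π (i, j) * (A k i * B l j) := by
          refine Finset.sum_le_sum fun k _ => Finset.sum_le_sum fun l _ => ?_
          have h1 := (hv (i, j) (k, l)).2
          have h2 := (hv (i, j) (k, l)).1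
          have hAB : 0 ≤ A k i * B l j := mul_nonneg (hA.1 k i) (hB.1 l j)
          nlinarith [mul_le_mul_of_nonneg_right
            (mul_le_mul_of_nonneg_left h1 (hπ (i, j))) hAB]
      _ = π (i, j) * ((∑ k, A k i) * (∑ l, B l j)) := by
          simp only [Finset.mul_sum, Finset.sum_mul]
          rw [Finset.sum_comm]
      _ = π (i, j) := by rw [hA.2 i, hB.2 j, one_mul, mul_one]
  calc payoff π v A B ≤ ∑ i, ∑ j, π (i, j) :=
        Finset.sum_le_sum fun i _ => Finset.sum_le_sum fun j _ => step i j
    _ = 1 := by rw [← hπ1, Fintype.sum_prod_type]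

lemma payoff_diff_le (hπ : ∀ q, 0 ≤ π q)
    (hv : ∀ q r, 0 ≤ v q r ∧ v q r ≤ 1)
    (A A' : K → I → ℝ) (B : L → J → ℝ) (hB : Stochastic B) :
    payoff π v A' B ≤ payoff π v A B +
      ∑ i, (∑ j, π (i, j)) * ∑ k, max (A' k i - A k i) 0 := by
  have key : ∀ i j k l, π (i, j) * v (i, j) (k, l) * (A' k i * B l j) ≤
      π (i, j) * v (i, j) (k, l) * (A k i * B l j) +
      π (i, j) * max (A' k i - A k i) 0 * B l j := by
    intro i j k l
    have hd : v (i, j) (k, l) * (A' k i - A k i) ≤ max (A' k i - A k i) 0 := by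
      rcases le_total (A' k i - A k i) 0 with h | h
      · rw [max_eq_right h]
        exact mul_nonpos_of_nonneg_of_nonpos (hv _ _).1 h |>.trans (le_refl 0)
      · rw [max_eq_left h]
        nlinarith [(hv (i,j) (k,l)).2, (hv (i,j) (k,l)).1]
    nlinarith [hπ (i, j), hB.1 l j, mul_le_mul_of_nonneg_left hd (hπ (i, j)),
      mul_le_mul_of_nonneg_right (mul_le_mul_of_nonneg_left hd (hπ (i, j))) (hB.1 l j)]
  calc payoff π v A' B
      ≤ ∑ i, ∑ j, ∑ k, ∑ l, (π (i, j) * v (i, j) (k, l) * (A k i * B l j) +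
          π (i, j) * max (A' k i - A k i) 0 * B l j) := by
        exact Finset.sum_le_sum fun i _ => Finset.sum_le_sum fun j _ =>
          Finset.sum_le_sum fun k _ => Finset.sum_le_sum fun l _ => key i j k l
    _ = payoff π v A B + ∑ i, ∑ j, ∑ k, ∑ l, π (i, j) * max (A' k i - A k i) 0 * B l j := by
        simp only [Finset.sum_add_distrib]; rfl
    _ = payoff π v A B + ∑ i, (∑ j, π (i, j)) * ∑ k, max (A' k i - A k i) 0 := by
        congr 1
        refine Finset.sum_congr rfl fun i _ => ?_
        rw [Finset.sum_mul]
        refine Finset.sum_congr rfl fun j _ => ?_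
        rw [Finset.mul_sum]
        refine Finset.sum_congr rfl fun k _ => ?_
        rw [← Finset.mul_sum, hB.2 j, mul_one]
end PayoffAux

lemma uniform_stoch {K Q : Type*} [Fintype K] [Fintype Q] [Nonempty K] :
    Stochastic (fun (_ : K) (_ : Q) => (Fintype.card K : ℝ)⁻¹) := by
  have hc : (0 : ℝ) < (Fintype.card K : ℝ) := by exact_mod_cast Fintype.card_pos
  refine ⟨fun _ _ => by positivity, fun q => ?_⟩
  rw [Finset.sum_const, Finset.card_univ, nsmul_eq_mul, mul_inv_cancel₀ (ne_of_gt hc)]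

lemma uniform_nosig {S0' S1' K0' K1' : Type*} [Fintype S0'] [Fintype S1'] [Fintype K0'] [Fintype K1']
    [Nonempty K0'] [Nonempty K1'] :
    Stochastic (fun (_ : K0' × K1') (_ : S0' × S1') => (Fintype.card (K0' × K1') : ℝ)⁻¹) ∧
    NoSig (fun (_ : K0' × K1') (_ : S0' × S1') => (Fintype.card (K0' × K1') : ℝ)⁻¹) := by
  have hc0 : (0 : ℝ) < (Fintype.card K0' : ℝ) := by exact_mod_cast Fintype.card_pos
  have hc1 : (0 : ℝ) < (Fintype.card K1' : ℝ) := by exact_mod_cast Fintype.card_pos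
  refine ⟨uniform_stoch, ⟨fun _ _ => (Fintype.card K0' : ℝ)⁻¹, uniform_stoch, fun k0 i0 i1 => ?_⟩,
    ⟨fun _ _ => (Fintype.card K1' : ℝ)⁻¹, uniform_stoch, fun k1 i0 i1 => ?_⟩⟩
  · rw [Finset.sum_const, Finset.card_univ, nsmul_eq_mul, Fintype.card_prod]
    push_cast
    field_simp
  · rw [Finset.sum_const, Finset.card_univ, nsmul_eq_mul, Fintype.card_prod]
    push_cast
    field_simp

lemma pen_le {K S : Type*} [Fintype K] [Fintype S]
    (m a Pi : K → S → ℝ) (hm0 : ∀ k i, 0 ≤ m k i) (hm1 : ∀ i, ∑ k, m k i = 1)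
    (ha0 : ∀ k i, 0 ≤ a k i) (ha1 : ∀ i, ∑ k, a k i = 1)
    (hPi : ∀ k i, 0 ≤ Pi k i ∧ Pi k i ≤ 1) :
    -(Fintype.card S : ℝ) ≤ (∑ k, ∑ i, (m k i - a k i) * Pi k i) ∧
    (∑ k, ∑ i, (m k i - a k i) * Pi k i) ≤ (Fintype.card S : ℝ) := by
  have hmsum : ∑ k, ∑ i, m k i = (Fintype.card S : ℝ) := by
    rw [Finset.sum_comm, Finset.sum_congr rfl fun i _ => hm1 i]
    simp [Finset.card_univ]
  have hasum : ∑ k, ∑ i, a k i = (Fintype.card S : ℝ) := by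
    rw [Finset.sum_comm, Finset.sum_congr rfl fun i _ => ha1 i]
    simp [Finset.card_univ]
  have hub : ∀ k i, (m k i - a k i) * Pi k i ≤ m k i := by
    intro k i
    nlinarith [(hPi k i).1, (hPi k i).2, hm0 k i, ha0 k i,
      mul_nonneg (ha0 k i) (hPi k i).1]
  have hlb : ∀ k i, -(a k i) ≤ (m k i - a k i) * Pi k i := by
    intro k i
    nlinarith [(hPi k i).1, (hPi k i).2, hm0 k i, ha0 k i,
      mul_nonneg (hm0 k i) (hPi k i).1]
  constructor
  · calc -(Fintype.card S : ℝ) = ∑ k : K, ∑ i : S, -(a k i) := by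
          simp only [Finset.sum_neg_distrib, hasum]
      _ ≤ _ := Finset.sum_le_sum fun k _ => Finset.sum_le_sum fun i _ => hlb k i
  · calc (∑ k, ∑ i, (m k i - a k i) * Pi k i) ≤ ∑ k, ∑ i, m k i :=
          Finset.sum_le_sum fun k _ => Finset.sum_le_sum fun i _ => hub k i
      _ = _ := hmsum


variable {S0 S1 K0 K1 T0 T1 L0 L1 : Type*}
  [Fintype S0] [Fintype S1] [Fintype K0] [Fintype K1]
  [Fintype T0] [Fintype T1] [Fintype L0] [Fintype L1]

set_option linter.unusedSectionVars false in
/-- Rounding an arbitrary stochastic triple to a genuinely no-signaling strategy,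
column by column. -/
lemma exists_tilde (A : K0 × K1 → S0 × S1 → ℝ) (hA : Stochastic A)
    (A0 : K0 → S0 → ℝ) (hA0 : Stochastic A0)
    (A1 : K1 → S1 → ℝ) (hA1 : Stochastic A1) :
    ∃ At : K0 × K1 → S0 × S1 → ℝ, Stochastic At ∧
      ((∀ k0 i0 i1, ∑ k1, At (k0, k1) (i0, i1) = A0 k0 i0) ∧
       (∀ k1 i0 i1, ∑ k0, At (k0, k1) (i0, i1) = A1 k1 i1)) ∧
      (∀ i : S0 × S1, ∑ k, max (At k i - A k i) 0 ≤
        (∑ k0, max ((∑ k1, A (k0, k1) i) - A0 k0 i.1) 0) +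
        (∑ k1, max ((∑ k0, A (k0, k1) i) - A1 k1 i.2) 0)) := by
  have H : ∀ i : S0 × S1, ∃ P' : K0 × K1 → ℝ, (∀ k, 0 ≤ P' k) ∧
      (∀ k0, ∑ k1, P' (k0, k1) = A0 k0 i.1) ∧
      (∀ k1, ∑ k0, P' (k0, k1) = A1 k1 i.2) ∧
      ∑ k, max (P' k - A k i) 0 ≤
        (∑ k0, max (A0 k0 i.1 - ∑ k1, A (k0, k1) i) 0) +
        (∑ k1, max (A1 k1 i.2 - ∑ k0, A (k0, k1) i) 0) := by
    intro i
    exact fix_both (fun k => A k i) (fun k => hA.1 k i) (hA.2 i)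
      (fun k0 => A0 k0 i.1) (fun k0 => hA0.1 k0 i.1) (hA0.2 i.1)
      (fun k1 => A1 k1 i.2) (fun k1 => hA1.1 k1 i.2) (hA1.2 i.2)
  choose P' h0 h1 h2 h3 using H
  refine ⟨fun k i => P' i k, ⟨fun k i => h0 i k, fun i => ?_⟩, ⟨?_, ?_⟩, ?_⟩
  · rw [Fintype.sum_prod_type, Finset.sum_congr rfl fun k0 _ => h1 i k0, hA0.2 i.1]
  · intro k0 i0 i1; exact h1 (i0, i1) k0
  · intro k1 i0 i1; exact h2 (i0, i1) k1
  · intro i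
    refine (h3 i).trans (le_of_eq ?_)
    have hmsum : ∑ k0, ∑ k1, A (k0, k1) i = 1 := by
      rw [show ∑ k0, ∑ k1, A (k0, k1) i = ∑ k : K0 × K1, A k i from
        (Fintype.sum_prod_type (f := fun k : K0 × K1 => A k i)).symm]
      exact hA.2 i
    have hm1sum : ∑ k1, ∑ k0, A (k0, k1) i = 1 := by
      rw [Finset.sum_comm]; exact hmsum
    congr 1
    · exact pos_part_sum_comm (by rw [hA0.2 i.1, hmsum])
    · exact pos_part_sum_comm (by rw [hA1.2 i.2, hm1sum])


/-- The no-signaling equilibrium value `λ(V) = min_A max_B ⟨V, A ⊗ B⟩`, the minimum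
over no-signaling stochastic `A` of the maximum over no-signaling stochastic `B`. -/
noncomputable def lamVal
    (π : (S0 × S1) × (T0 × T1) → ℝ)
    (v : (S0 × S1) × (T0 × T1) → (K0 × K1) × (L0 × L1) → ℝ) : ℝ :=
  ⨅ A : {A : K0 × K1 → S0 × S1 → ℝ // Stochastic A ∧ NoSig A},
    ⨆ B : {B : L0 × L1 → T0 × T1 → ℝ // Stochastic B ∧ NoSig B},
      payoff π v A.1 B.1

/-- The relaxed penalized min-max value `μ(V)`: Alice plays an arbitrary stochastic
triple `(A, A0, A1)`, Bob plays a no-signaling stochastic `B` together with penalty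
matrices `0 ≤ Π_c ≤ e p_Alice^T`, and the objective is
`⟨V, A⊗B⟩ + Σ_c ⟨mar(A) − A_c ⊗ e^T, Π_c⟩`. -/
noncomputable def muVal
    (π : (S0 × S1) × (T0 × T1) → ℝ)
    (v : (S0 × S1) × (T0 × T1) → (K0 × K1) × (L0 × L1) → ℝ) : ℝ :=
  ⨅ X : {X : (K0 × K1 → S0 × S1 → ℝ) × (K0 → S0 → ℝ) × (K1 → S1 → ℝ) //
          Stochastic X.1 ∧ Stochastic X.2.1 ∧ Stochastic X.2.2},
    ⨆ Y : {Y : (L0 × L1 → T0 × T1 → ℝ) × (K0 → S0 × S1 → ℝ) × (K1 → S0 × S1 → ℝ) //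
          (Stochastic Y.1 ∧ NoSig Y.1) ∧
          (∀ k0 i, 0 ≤ Y.2.1 k0 i ∧ Y.2.1 k0 i ≤ ∑ j, π (i, j)) ∧
          (∀ k1 i, 0 ≤ Y.2.2 k1 i ∧ Y.2.2 k1 i ≤ ∑ j, π (i, j))},
      payoff π v X.1.1 Y.1.1 +
        (∑ k0, ∑ i, ((∑ k1, X.1.1 (k0, k1) i) - X.1.2.1 k0 i.1) * Y.1.2.1 k0 i) +
        (∑ k1, ∑ i, ((∑ k0, X.1.1 (k0, k1) i) - X.1.2.2 k1 i.2) * Y.1.2.2 k1 i)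

set_option maxHeartbeats 1000000

/-- Equivalence of the min-max problems: `μ(V) = λ(V)`. -/
theorem mu_eq_lambda
    [Nonempty S0] [Nonempty S1] [Nonempty K0] [Nonempty K1]
    [Nonempty T0] [Nonempty T1] [Nonempty L0] [Nonempty L1]
    (π : (S0 × S1) × (T0 × T1) → ℝ) (hπ : ∀ q, 0 ≤ π q) (hπ1 : ∑ q, π q = 1)
    (v : (S0 × S1) × (T0 × T1) → (K0 × K1) × (L0 × L1) → ℝ)
    (hv : ∀ q r, 0 ≤ v q r ∧ v q r ≤ 1) :
    muVal π v = lamVal π v := by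
  classical
  have hp0 : ∀ i : S0 × S1, 0 ≤ ∑ j, π (i, j) := fun i => Finset.sum_nonneg fun j _ => hπ _
  have hπtot : ∑ i : S0 × S1, ∑ j : T0 × T1, π (i, j) = 1 := by
    rw [show ∑ i : S0 × S1, ∑ j : T0 × T1, π (i, j) = ∑ q, π q from
      (Fintype.sum_prod_type (f := fun q => π q)).symm]
    exact hπ1
  have hp1 : ∀ i : S0 × S1, (∑ j, π (i, j)) ≤ 1 := by
    intro i
    calc (∑ j, π (i, j)) ≤ ∑ i', ∑ j, π (i', j) :=
          Finset.single_le_sum (f := fun i' => ∑ j, π (i', j)) (fun i' _ => hp0 i') (mem_univ i)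
      _ = 1 := hπtot
  have hBu := uniform_nosig (S0' := T0) (S1' := T1) (K0' := L0) (K1' := L1)
  have hAu := uniform_nosig (S0' := S0) (S1' := S1) (K0' := K0) (K1' := K1)
  haveI iA : Nonempty {A : K0 × K1 → S0 × S1 → ℝ // Stochastic A ∧ NoSig A} := ⟨⟨_, hAu⟩⟩
  haveI iB : Nonempty {B : L0 × L1 → T0 × T1 → ℝ // Stochastic B ∧ NoSig B} := ⟨⟨_, hBu⟩⟩
  haveI iX : Nonempty {X : (K0 × K1 → S0 × S1 → ℝ) × (K0 → S0 → ℝ) × (K1 → S1 → ℝ) //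
      Stochastic X.1 ∧ Stochastic X.2.1 ∧ Stochastic X.2.2} :=
    ⟨⟨(fun _ _ => (Fintype.card (K0 × K1) : ℝ)⁻¹, fun _ _ => (Fintype.card K0 : ℝ)⁻¹,
       fun _ _ => (Fintype.card K1 : ℝ)⁻¹), uniform_stoch, uniform_stoch, uniform_stoch⟩⟩
  haveI iY : Nonempty {Y : (L0 × L1 → T0 × T1 → ℝ) × (K0 → S0 × S1 → ℝ) × (K1 → S0 × S1 → ℝ) //
      (Stochastic Y.1 ∧ NoSig Y.1) ∧
      (∀ k0 i, 0 ≤ Y.2.1 k0 i ∧ Y.2.1 k0 i ≤ ∑ j, π (i, j)) ∧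
      (∀ k1 i, 0 ≤ Y.2.2 k1 i ∧ Y.2.2 k1 i ≤ ∑ j, π (i, j))} :=
    ⟨⟨(fun _ _ => (Fintype.card (L0 × L1) : ℝ)⁻¹, fun _ _ => 0, fun _ _ => 0),
      ⟨hBu.1, hBu.2⟩, fun k0 i => ⟨le_refl 0, hp0 i⟩, fun k1 i => ⟨le_refl 0, hp0 i⟩⟩⟩
  have objub : ∀ (X : {X : (K0 × K1 → S0 × S1 → ℝ) × (K0 → S0 → ℝ) × (K1 → S1 → ℝ) //
        Stochastic X.1 ∧ Stochastic X.2.1 ∧ Stochastic X.2.2})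
      (Y : {Y : (L0 × L1 → T0 × T1 → ℝ) × (K0 → S0 × S1 → ℝ) × (K1 → S0 × S1 → ℝ) //
        (Stochastic Y.1 ∧ NoSig Y.1) ∧
        (∀ k0 i, 0 ≤ Y.2.1 k0 i ∧ Y.2.1 k0 i ≤ ∑ j, π (i, j)) ∧
        (∀ k1 i, 0 ≤ Y.2.2 k1 i ∧ Y.2.2 k1 i ≤ ∑ j, π (i, j))}),
      (-(((Fintype.card (S0 × S1) : ℝ)) + (Fintype.card (S0 × S1) : ℝ)) ≤
        payoff π v X.1.1 Y.1.1 +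
          (∑ k0, ∑ i, ((∑ k1, X.1.1 (k0, k1) i) - X.1.2.1 k0 i.1) * Y.1.2.1 k0 i) +
          (∑ k1, ∑ i, ((∑ k0, X.1.1 (k0, k1) i) - X.1.2.2 k1 i.2) * Y.1.2.2 k1 i)) ∧
      (payoff π v X.1.1 Y.1.1 +
          (∑ k0, ∑ i, ((∑ k1, X.1.1 (k0, k1) i) - X.1.2.1 k0 i.1) * Y.1.2.1 k0 i) +
          (∑ k1, ∑ i, ((∑ k0, X.1.1 (k0, k1) i) - X.1.2.2 k1 i.2) * Y.1.2.2 k1 i)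
        ≤ 1 + ((Fintype.card (S0 × S1) : ℝ) + (Fintype.card (S0 × S1) : ℝ))) := by
    rintro ⟨⟨A, A0, A1⟩, hA, hA0, hA1⟩ ⟨⟨B, Pi0, Pi1⟩, ⟨hBst, hBns⟩, hPi0, hPi1⟩
    dsimp only
    have h1 : payoff π v A B ≤ 1 := payoff_le_one π v hπ hπ1 hv A hA B hBst
    have h0 : 0 ≤ payoff π v A B := payoff_nonneg π v hπ hv A hA.1 B hBst.1
    have hmars0 : ∀ i : S0 × S1, ∑ k0, ∑ k1, A (k0, k1) i = 1 := by
      intro i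
      rw [show ∑ k0, ∑ k1, A (k0, k1) i = ∑ k : K0 × K1, A k i from
        (Fintype.sum_prod_type (f := fun k : K0 × K1 => A k i)).symm]
      exact hA.2 i
    have h2 := pen_le (fun k0 (i : S0 × S1) => ∑ k1, A (k0, k1) i) (fun k0 i => A0 k0 i.1) Pi0
      (fun k0 i => Finset.sum_nonneg fun k1 _ => hA.1 _ i) hmars0
      (fun k0 i => hA0.1 k0 i.1) (fun i => hA0.2 i.1)
      (fun k0 i => ⟨(hPi0 k0 i).1, (hPi0 k0 i).2.trans (hp1 i)⟩)
    have h3 := pen_le (fun k1 (i : S0 × S1) => ∑ k0, A (k0, k1) i) (fun k1 i => A1 k1 i.2) Pi1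
      (fun k1 i => Finset.sum_nonneg fun k0 _ => hA.1 _ i)
      (fun i => by rw [Finset.sum_comm]; exact hmars0 i)
      (fun k1 i => hA1.1 k1 i.2) (fun i => hA1.2 i.2)
      (fun k1 i => ⟨(hPi1 k1 i).1, (hPi1 k1 i).2.trans (hp1 i)⟩)
    constructor
    · linarith [h2.1, h3.1]
    · linarith [h2.2, h3.2]
  -- boundedness facts
  have hYbdd : ∀ X' : {X : (K0 × K1 → S0 × S1 → ℝ) × (K0 → S0 → ℝ) × (K1 → S1 → ℝ) //
        Stochastic X.1 ∧ Stochastic X.2.1 ∧ Stochastic X.2.2},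
      BddAbove (Set.range (fun Y : {Y : (L0 × L1 → T0 × T1 → ℝ) ×
          (K0 → S0 × S1 → ℝ) × (K1 → S0 × S1 → ℝ) //
          (Stochastic Y.1 ∧ NoSig Y.1) ∧
          (∀ k0 i, 0 ≤ Y.2.1 k0 i ∧ Y.2.1 k0 i ≤ ∑ j, π (i, j)) ∧
          (∀ k1 i, 0 ≤ Y.2.2 k1 i ∧ Y.2.2 k1 i ≤ ∑ j, π (i, j))} =>
        payoff π v X'.1.1 Y.1.1 +
          (∑ k0, ∑ i, ((∑ k1, X'.1.1 (k0, k1) i) - X'.1.2.1 k0 i.1) * Y.1.2.1 k0 i) +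
          (∑ k1, ∑ i, ((∑ k0, X'.1.1 (k0, k1) i) - X'.1.2.2 k1 i.2) * Y.1.2.2 k1 i))) := by
    intro X'
    refine ⟨1 + ((Fintype.card (S0 × S1) : ℝ) + (Fintype.card (S0 × S1) : ℝ)), ?_⟩
    rintro y ⟨Y', rfl⟩
    exact (objub X' Y').2
  have hmubdd : BddBelow (Set.range
      (fun X : {X : (K0 × K1 → S0 × S1 → ℝ) × (K0 → S0 → ℝ) × (K1 → S1 → ℝ) //
        Stochastic X.1 ∧ Stochastic X.2.1 ∧ Stochastic X.2.2} =>
      ⨆ Y : {Y : (L0 × L1 → T0 × T1 → ℝ) × (K0 → S0 × S1 → ℝ) × (K1 → S0 × S1 → ℝ) //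
          (Stochastic Y.1 ∧ NoSig Y.1) ∧
          (∀ k0 i, 0 ≤ Y.2.1 k0 i ∧ Y.2.1 k0 i ≤ ∑ j, π (i, j)) ∧
          (∀ k1 i, 0 ≤ Y.2.2 k1 i ∧ Y.2.2 k1 i ≤ ∑ j, π (i, j))},
        payoff π v X.1.1 Y.1.1 +
          (∑ k0, ∑ i, ((∑ k1, X.1.1 (k0, k1) i) - X.1.2.1 k0 i.1) * Y.1.2.1 k0 i) +
          (∑ k1, ∑ i, ((∑ k0, X.1.1 (k0, k1) i) - X.1.2.2 k1 i.2) * Y.1.2.2 k1 i))) := by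
    refine ⟨-(((Fintype.card (S0 × S1) : ℝ)) + (Fintype.card (S0 × S1) : ℝ)), ?_⟩
    rintro x ⟨X', rfl⟩
    obtain ⟨Y⟩ := iY
    exact le_trans ((objub X' Y).1) (le_ciSup (hYbdd X') Y)
  have hlamBbdd : ∀ A' : {A : K0 × K1 → S0 × S1 → ℝ // Stochastic A ∧ NoSig A},
      BddAbove (Set.range (fun B : {B : L0 × L1 → T0 × T1 → ℝ // Stochastic B ∧ NoSig B} =>
        payoff π v A'.1 B.1)) := by
    intro A'
    refine ⟨1, ?_⟩
    rintro y ⟨B', rfl⟩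
    exact payoff_le_one π v hπ hπ1 hv A'.1 A'.2.1 B'.1 B'.2.1
  have hlambdd : BddBelow (Set.range
      (fun A : {A : K0 × K1 → S0 × S1 → ℝ // Stochastic A ∧ NoSig A} =>
        ⨆ B : {B : L0 × L1 → T0 × T1 → ℝ // Stochastic B ∧ NoSig B},
          payoff π v A.1 B.1)) := by
    refine ⟨0, ?_⟩
    rintro x ⟨A', rfl⟩
    obtain ⟨Bp⟩ := iB
    exact le_trans (payoff_nonneg π v hπ hv A'.1 A'.2.1.1 Bp.1 Bp.2.1.1)
      (le_ciSup (hlamBbdd A') Bp)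
  refine le_antisymm ?_ ?_
  · -- μ ≤ λ
    unfold lamVal
    refine le_ciInf fun Ap => ?_
    obtain ⟨A, hAst, hAns⟩ := Ap
    obtain ⟨⟨A0, hA0st, hmar0⟩, ⟨A1, hA1st, hmar1⟩⟩ := hAns
    have s1 : muVal π v ≤
        ⨆ Y : {Y : (L0 × L1 → T0 × T1 → ℝ) × (K0 → S0 × S1 → ℝ) × (K1 → S0 × S1 → ℝ) //
          (Stochastic Y.1 ∧ NoSig Y.1) ∧
          (∀ k0 i, 0 ≤ Y.2.1 k0 i ∧ Y.2.1 k0 i ≤ ∑ j, π (i, j)) ∧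
          (∀ k1 i, 0 ≤ Y.2.2 k1 i ∧ Y.2.2 k1 i ≤ ∑ j, π (i, j))},
          payoff π v A Y.1.1 +
            (∑ k0, ∑ i, ((∑ k1, A (k0, k1) i) - A0 k0 i.1) * Y.1.2.1 k0 i) +
            (∑ k1, ∑ i, ((∑ k0, A (k0, k1) i) - A1 k1 i.2) * Y.1.2.2 k1 i) := by
      unfold muVal
      exact ciInf_le hmubdd ⟨(A, A0, A1), hAst, hA0st, hA1st⟩
    have s2 : (⨆ Y : {Y : (L0 × L1 → T0 × T1 → ℝ) × (K0 → S0 × S1 → ℝ) × (K1 → S0 × S1 → ℝ) //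
          (Stochastic Y.1 ∧ NoSig Y.1) ∧
          (∀ k0 i, 0 ≤ Y.2.1 k0 i ∧ Y.2.1 k0 i ≤ ∑ j, π (i, j)) ∧
          (∀ k1 i, 0 ≤ Y.2.2 k1 i ∧ Y.2.2 k1 i ≤ ∑ j, π (i, j))},
          payoff π v A Y.1.1 +
            (∑ k0, ∑ i, ((∑ k1, A (k0, k1) i) - A0 k0 i.1) * Y.1.2.1 k0 i) +
            (∑ k1, ∑ i, ((∑ k0, A (k0, k1) i) - A1 k1 i.2) * Y.1.2.2 k1 i)) ≤
        ⨆ B : {B : L0 × L1 → T0 × T1 → ℝ // Stochastic B ∧ NoSig B}, payoff π v A B.1 := by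
      refine ciSup_le fun Yp => ?_
      obtain ⟨⟨B, Pi0, Pi1⟩, hYp⟩ := Yp
      dsimp only
      have z0 : (∑ k0, ∑ i : S0 × S1, ((∑ k1, A (k0, k1) i) - A0 k0 i.1) * Pi0 k0 i) = 0 :=
        Finset.sum_eq_zero fun k0 _ => Finset.sum_eq_zero fun i _ => by
          have h := hmar0 k0 i.1 i.2
          rw [Prod.mk.eta] at h
          rw [h, sub_self, zero_mul]
      have z1 : (∑ k1, ∑ i : S0 × S1, ((∑ k0, A (k0, k1) i) - A1 k1 i.2) * Pi1 k1 i) = 0 :=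
        Finset.sum_eq_zero fun k1 _ => Finset.sum_eq_zero fun i _ => by
          have h := hmar1 k1 i.1 i.2
          rw [Prod.mk.eta] at h
          rw [h, sub_self, zero_mul]
      rw [z0, z1, add_zero, add_zero]
      exact le_ciSup (hlamBbdd ⟨A, hAst, ⟨A0, hA0st, hmar0⟩, ⟨A1, hA1st, hmar1⟩⟩) ⟨B, hYp.1⟩
    exact s1.trans s2
  · -- λ ≤ μ
    unfold muVal
    refine le_ciInf fun Xp => ?_
    obtain ⟨⟨A, A0, A1⟩, hA, hA0, hA1⟩ := Xp
    dsimp only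
    obtain ⟨At, hAtst, hAtmar, hAttv⟩ := exists_tilde A hA A0 hA0 A1 hA1
    have hAtns : NoSig At := ⟨⟨A0, hA0, hAtmar.1⟩, ⟨A1, hA1, hAtmar.2⟩⟩
    have s1 : lamVal π v ≤ ⨆ B : {B : L0 × L1 → T0 × T1 → ℝ // Stochastic B ∧ NoSig B},
        payoff π v At B.1 := by
      unfold lamVal
      exact ciInf_le hlambdd ⟨At, hAtst, hAtns⟩
    refine s1.trans (ciSup_le fun Bp => ?_)
    obtain ⟨B, hBst, hBns⟩ := Bp
    dsimp only
    set Pi0s : K0 → S0 × S1 → ℝ :=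
      fun k0 i => if A0 k0 i.1 ≤ ∑ k1, A (k0, k1) i then (∑ j, π (i, j)) else 0 with hPi0s
    set Pi1s : K1 → S0 × S1 → ℝ :=
      fun k1 i => if A1 k1 i.2 ≤ ∑ k0, A (k0, k1) i then (∑ j, π (i, j)) else 0 with hPi1s
    have hPi0ok : ∀ k0 i, 0 ≤ Pi0s k0 i ∧ Pi0s k0 i ≤ ∑ j, π (i, j) := by
      intro k0 i
      simp only [hPi0s]
      split
      · exact ⟨hp0 i, le_refl _⟩
      · exact ⟨le_refl 0, hp0 i⟩
    have hPi1ok : ∀ k1 i, 0 ≤ Pi1s k1 i ∧ Pi1s k1 i ≤ ∑ j, π (i, j) := by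
      intro k1 i
      simp only [hPi1s]
      split
      · exact ⟨hp0 i, le_refl _⟩
      · exact ⟨le_refl 0, hp0 i⟩
    have e0 : ∀ k0 (i : S0 × S1), ((∑ k1, A (k0, k1) i) - A0 k0 i.1) * Pi0s k0 i
        = (∑ j, π (i, j)) * max ((∑ k1, A (k0, k1) i) - A0 k0 i.1) 0 := by
      intro k0 i
      simp only [hPi0s]
      split
      · rename_i h
        rw [max_eq_left (by linarith)]
        ring
      · rename_i h
        push_neg at h
        rw [max_eq_right (by linarith)]
        ring
    have e1 : ∀ k1 (i : S0 × S1), ((∑ k0, A (k0, k1) i) - A1 k1 i.2) * Pi1s k1 i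
        = (∑ j, π (i, j)) * max ((∑ k0, A (k0, k1) i) - A1 k1 i.2) 0 := by
      intro k1 i
      simp only [hPi1s]
      split
      · rename_i h
        rw [max_eq_left (by linarith)]
        ring
      · rename_i h
        push_neg at h
        rw [max_eq_right (by linarith)]
        ring
    have rhs0 : (∑ k0, ∑ i, ((∑ k1, A (k0, k1) i) - A0 k0 i.1) * Pi0s k0 i)
        = ∑ i : S0 × S1, (∑ j, π (i, j)) * ∑ k0, max ((∑ k1, A (k0, k1) i) - A0 k0 i.1) 0 := by
      rw [Finset.sum_comm]
      refine Finset.sum_congr rfl fun i _ => ?_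
      rw [Finset.mul_sum]
      exact Finset.sum_congr rfl fun k0 _ => e0 k0 i
    have rhs1 : (∑ k1, ∑ i, ((∑ k0, A (k0, k1) i) - A1 k1 i.2) * Pi1s k1 i)
        = ∑ i : S0 × S1, (∑ j, π (i, j)) * ∑ k1, max ((∑ k0, A (k0, k1) i) - A1 k1 i.2) 0 := by
      rw [Finset.sum_comm]
      refine Finset.sum_congr rfl fun i _ => ?_
      rw [Finset.mul_sum]
      exact Finset.sum_congr rfl fun k1 _ => e1 k1 i
    have hdiff := payoff_diff_le π v hπ hv A At B hBst
    have hmid : ∑ i : S0 × S1, (∑ j, π (i, j)) * ∑ k, max (At k i - A k i) 0 ≤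
        (∑ k0, ∑ i, ((∑ k1, A (k0, k1) i) - A0 k0 i.1) * Pi0s k0 i) +
        (∑ k1, ∑ i, ((∑ k0, A (k0, k1) i) - A1 k1 i.2) * Pi1s k1 i) := by
      rw [rhs0, rhs1, ← Finset.sum_add_distrib]
      refine Finset.sum_le_sum fun i _ => ?_
      rw [← mul_add]
      exact mul_le_mul_of_nonneg_left (hAttv i) (hp0 i)
    have final : payoff π v At B ≤ payoff π v A B +
        (∑ k0, ∑ i, ((∑ k1, A (k0, k1) i) - A0 k0 i.1) * Pi0s k0 i) +
        (∑ k1, ∑ i, ((∑ k0, A (k0, k1) i) - A1 k1 i.2) * Pi1s k1 i) := by linarith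
    exact final.trans (le_ciSup (hYbdd ⟨(A, A0, A1), hA, hA0, hA1⟩)
      ⟨(B, Pi0s, Pi1s), ⟨hBst, hBns⟩, hPi0ok, hPi1ok⟩)
end

section
/- Let ν = min_{a∈X} max_{b∈Y} g(a,b) for bilinear g on compact convex sets X, Y, and suppose sequences a^1,…,a^T ∈ X and b^1,…,b^T ∈ Y satisfy: (i) each b^t is a (δ/2)-best response to a^t, i.e., g(a^t, b^t) ≥ max_{b∈Y} g(a^t, b) − δ/2; and (ii) the regret bound (1/T) Σ_t g(a^t, b^t) ≤ g(a, (1/T) Σ_t b^t) + δ/2 holds for all a ∈ X. Then the averages ā = (1/T) Σ_t a^t and b̄ = (1/T) Σ_t b^t satisfy: g(ā, b) ≤ ν + δ for all b ∈ Y, and g(a, b̄) ≥ ν − δ for all a ∈ X; i.e., (ā, b̄) is a δ-optimal equilibrium pair. -/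
open Finset

/-- Averaged iterates of a best-response dynamics form a δ-optimal equilibrium pair:
if `ν` is the min-max value of a bilinear function `g` on nonempty compact convex sets
`X, Y` (attained at some `a*` and `b*`), each `b^t` is a `(δ/2)`-best response to
`a^t`, and the regret bound `(1/T) Σ_t g(a^t, b^t) ≤ g(a, (1/T) Σ_t b^t) + δ/2` holds
for all `a ∈ X`, then the averages `ā, b̄` satisfy `g(ā, b) ≤ ν + δ` for all `b ∈ Y`
and `g(a, b̄) ≥ ν − δ` for all `a ∈ X`. -/
theorem averaged_iterates_delta_optimal
    {E F : Type*} [NormedAddCommGroup E] [NormedSpace ℝ E] [FiniteDimensional ℝ E]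
    [NormedAddCommGroup F] [NormedSpace ℝ F] [FiniteDimensional ℝ F]
    (X : Set E) (Y : Set F)
    (hXne : X.Nonempty) (hXc : IsCompact X) (hXv : Convex ℝ X)
    (hYne : Y.Nonempty) (hYc : IsCompact Y) (hYv : Convex ℝ Y)
    (g : E → F → ℝ)
    (hg1 : ∀ b, IsLinearMap ℝ fun a => g a b)
    (hg2 : ∀ a, IsLinearMap ℝ (g a))
    (ν : ℝ)
    (hmin : ∃ astar ∈ X, ∀ b ∈ Y, g astar b ≤ ν)
    (hmax : ∃ bstar ∈ Y, ∀ a ∈ X, ν ≤ g a bstar)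
    (δ : ℝ) (hδ : 0 ≤ δ)
    (T : ℕ) (hT : 0 < T)
    (a : ℕ → E) (b : ℕ → F)
    (haX : ∀ t < T, a t ∈ X) (hbY : ∀ t < T, b t ∈ Y)
    (hbr : ∀ t < T, ∀ b' ∈ Y, g (a t) b' - δ / 2 ≤ g (a t) (b t))
    (hregret : ∀ a' ∈ X,
      (1 / (T : ℝ)) * ∑ t ∈ Finset.range T, g (a t) (b t) ≤
        g a' ((1 / (T : ℝ)) • ∑ t ∈ Finset.range T, b t) + δ / 2) :
    ((1 / (T : ℝ)) • ∑ t ∈ Finset.range T, a t) ∈ X ∧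
    ((1 / (T : ℝ)) • ∑ t ∈ Finset.range T, b t) ∈ Y ∧
    (∀ b' ∈ Y, g ((1 / (T : ℝ)) • ∑ t ∈ Finset.range T, a t) b' ≤ ν + δ) ∧
    (∀ a' ∈ X, ν - δ ≤ g a' ((1 / (T : ℝ)) • ∑ t ∈ Finset.range T, b t)) := by

  have hTpos : (0:ℝ) < T := by exact_mod_cast hT
  have hw : ∀ t ∈ Finset.range T, (0:ℝ) ≤ 1 / (T:ℝ) := fun t _ => by positivity
  have hws : ∑ _t ∈ Finset.range T, (1:ℝ) / (T:ℝ) = 1 := by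
    rw [Finset.sum_const, Finset.card_range, nsmul_eq_mul]
    field_simp
  have haMem : ((1 / (T : ℝ)) • ∑ t ∈ Finset.range T, a t) ∈ X := by
    rw [Finset.smul_sum]
    exact hXv.sum_mem hw hws fun t ht => haX t (Finset.mem_range.mp ht)
  have hbMem : ((1 / (T : ℝ)) • ∑ t ∈ Finset.range T, b t) ∈ Y := by
    rw [Finset.smul_sum]
    exact hYv.sum_mem hw hws fun t ht => hbY t (Finset.mem_range.mp ht)
  obtain ⟨astar, hastar, hstar⟩ := hmin
  obtain ⟨bstar, hbstar, hstar2⟩ := hmax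
  refine ⟨haMem, hbMem, ?_, ?_⟩
  · intro b' hb'
    have hlin : g ((1 / (T : ℝ)) • ∑ t ∈ Finset.range T, a t) b'
        = (1 / (T:ℝ)) * ∑ t ∈ Finset.range T, g (a t) b' := by
      rw [(hg1 b').map_smul, smul_eq_mul]
      congr 1
      exact map_sum (IsLinearMap.mk' _ (hg1 b')) a (Finset.range T)
    rw [hlin]
    have h1 : ∑ t ∈ Finset.range T, g (a t) b'
        ≤ ∑ t ∈ Finset.range T, (g (a t) (b t) + δ / 2) := by
      refine Finset.sum_le_sum fun t ht => ?_
      have := hbr t (Finset.mem_range.mp ht) b' hb'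
      linarith
    have h2 := hregret astar hastar
    have h3 := hstar _ hbMem
    rw [Finset.sum_add_distrib, Finset.sum_const, Finset.card_range, nsmul_eq_mul] at h1
    have h4 : (1 / (T:ℝ)) * ∑ t ∈ Finset.range T, g (a t) b'
        ≤ (1 / (T:ℝ)) * (∑ t ∈ Finset.range T, g (a t) (b t) + T * (δ/2)) := by
      apply mul_le_mul_of_nonneg_left h1 (by positivity)
    have h5 : (1 / (T:ℝ)) * ((T:ℝ) * (δ/2)) = δ/2 := by field_simp
    calc (1 / (T:ℝ)) * ∑ t ∈ Finset.range T, g (a t) b'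
        ≤ (1 / (T:ℝ)) * ∑ t ∈ Finset.range T, g (a t) (b t) + δ/2 := by
          rw [mul_add] at h4; linarith
      _ ≤ ν + δ := by linarith
  · intro a' ha'
    have h2 := hregret a' ha'
    have h1 : ∑ t ∈ Finset.range T, (ν - δ/2) ≤ ∑ t ∈ Finset.range T, g (a t) (b t) := by
      refine Finset.sum_le_sum fun t ht => ?_
      have ht' := Finset.mem_range.mp ht
      have := hbr t ht' bstar hbstar
      have := hstar2 (a t) (haX t ht')
      linarith
    rw [Finset.sum_const, Finset.card_range, nsmul_eq_mul] at h1
    have h4 : (1 / (T:ℝ)) * ((T:ℝ) * (ν - δ/2)) ≤ (1 / (T:ℝ)) * ∑ t ∈ Finset.range T, g (a t) (b t) :=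
      mul_le_mul_of_nonneg_left h1 (by positivity)
    have h5 : (1 / (T:ℝ)) * ((T:ℝ) * (ν - δ/2)) = ν - δ/2 := by field_simp
    linarith
end
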